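/- arXiv:2505.07503 — 3 statements merged into one kernel-verified Lean document; each statement's English description precedes it below -/
import Mathlib

section
/- Let Θ be a measurable space, let P be a probability measure on Θ (the prior over parameters), and let L : Θ → ℝ be a measurable function with L(θ) > 0 for P-almost every θ (the likelihood θ ↦ p(y⁽¹:N⁾ | x⁽¹:N⁾, θ)), such that the evidence Z := ∫ L dP satisfies 0 < Z < ∞. Define the posterior measure Π := P.withDensity (fun θ => ENNReal.ofReal (L θ / Z)). Let Q be a probability measure on Θ (the variational distribution) with Q ≪ P, KL(Q‖P) < ∞, and θ ↦ log (L θ) integrable with respect to Q. Then the gap between the variational codelength and the Bayesian codelength equals the KL divergence from Q to the posterior: (∫ (− log (L θ)) dQ(θ) + (KL(Q‖P)).toReal) − (− log Z) = (KL(Q‖Π)).toReal, and moreover KL(Q‖Π) < ∞. -/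
open MeasureTheory
open scoped ENNReal NNReal

open scoped Classical in
/-- Kullback–Leibler divergence between two measures (Mathlib's `klDiv`). -/
noncomputable def klDiv {α : Type*} [MeasurableSpace α] (μ ν : Measure α) : ℝ≥0∞ :=
  if μ ≪ ν ∧ Integrable (llr μ ν) μ then ENNReal.ofReal (∫ x, llr μ ν x ∂μ) else ∞

/-! Since `L > 0` a.e., the posterior is the prior tilted by `log L`, and against a tilted
measure the log-likelihood ratio is `llr Q Π = llr Q P - log L + log Z` `Q`-a.e.
Integrating against `Q` gives the identity. -/

lemma klDiv_eq_informationTheory_klDiv {α : Type*} [MeasurableSpace α] {μ ν : Measure α}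
    (h : μ Set.univ = ν Set.univ) : klDiv μ ν = InformationTheory.klDiv μ ν := by
  by_cases hμν : μ ≪ ν ∧ Integrable (llr μ ν) μ
  · rw [klDiv, if_pos hμν, InformationTheory.klDiv_of_ac_of_integrable hμν.1 hμν.2,
      measureReal_def, measureReal_def, h, add_sub_cancel_right]
  · rw [klDiv, if_neg hμν, eq_comm, InformationTheory.klDiv_eq_top_iff]
    exact fun hac hint => hμν ⟨hac, hint⟩

section PositiveDensity

variable {α : Type*} [MeasurableSpace α] {μ : Measure α} {L : α → ℝ}

lemma exp_log_ae_eq (hL : ∀ᵐ x ∂μ, 0 < L x) :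
    (fun x => Real.exp (Real.log (L x))) =ᵐ[μ] L := by
  filter_upwards [hL] with x hx using Real.exp_log hx

lemma withDensity_ofReal_div_integral_eq_tilted_log (hL : ∀ᵐ x ∂μ, 0 < L x) :
    μ.withDensity (fun x => ENNReal.ofReal (L x / ∫ y, L y ∂μ))
      = μ.tilted fun x => Real.log (L x) := by
  rw [Measure.tilted, integral_congr_ae (exp_log_ae_eq hL)]
  refine withDensity_congr_ae ?_
  filter_upwards [exp_log_ae_eq hL] with x hx
  rw [hx]

end PositiveDensity

theorem variational_gap_eq_klDiv_posterior_general
    {Θ : Type*} [MeasurableSpace Θ] (P : Measure Θ) [IsProbabilityMeasure P]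
    (L : Θ → ℝ) (hL_pos : ∀ᵐ θ ∂P, 0 < L θ)
    (hL_int : Integrable L P)
    (Q : Measure Θ) [IsProbabilityMeasure Q]
    (hKL : klDiv Q P < ∞) (hlogL : Integrable (fun θ => Real.log (L θ)) Q) :
    ((∫ θ, (- Real.log (L θ)) ∂Q) + (klDiv Q P).toReal)
        - (- Real.log (∫ θ, L θ ∂P))
      = (klDiv Q (P.withDensity fun θ => ENNReal.ofReal (L θ / ∫ θ', L θ' ∂P))).toReal
    ∧ klDiv Q (P.withDensity fun θ => ENNReal.ofReal (L θ / ∫ θ', L θ' ∂P)) < ∞ := by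
  have h_exp_int : Integrable (fun θ => Real.exp (Real.log (L θ))) P :=
    hL_int.congr (exp_log_ae_eq hL_pos).symm
  have := isProbabilityMeasure_tilted h_exp_int
  have hQP_univ : Q Set.univ = P Set.univ := by simp
  have hQPost_univ : Q Set.univ = (P.tilted fun θ => Real.log (L θ)) Set.univ := by simp
  obtain ⟨hQP, h_llr⟩ := InformationTheory.klDiv_ne_top_iff.mp <|
    klDiv_eq_informationTheory_klDiv hQP_univ ▸ hKL.ne
  have hQPost : Q ≪ P.tilted fun θ => Real.log (L θ) :=
    hQP.trans (absolutelyContinuous_tilted h_exp_int)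
  rw [withDensity_ofReal_div_integral_eq_tilted_log hL_pos,
    klDiv_eq_informationTheory_klDiv hQP_univ, klDiv_eq_informationTheory_klDiv hQPost_univ,
    InformationTheory.toReal_klDiv_of_measure_eq hQP hQP_univ,
    InformationTheory.toReal_klDiv_of_measure_eq hQPost hQPost_univ,
    integral_llr_tilted_right hQP hlogL h_exp_int h_llr,
    integral_congr_ae (exp_log_ae_eq hL_pos), integral_neg]
  exact ⟨by ring, (InformationTheory.klDiv_ne_top hQPost
    (integrable_llr_tilted_right hQP hlogL h_llr h_exp_int)).lt_top⟩

/-- The gap between the variational codelength and the Bayesian codelength equals the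
KL divergence from the variational distribution `Q` to the posterior. -/
theorem variational_gap_eq_klDiv_posterior
    {Θ : Type*} [MeasurableSpace Θ] (P : Measure Θ) [IsProbabilityMeasure P]
    (L : Θ → ℝ) (hL_meas : Measurable L) (hL_pos : ∀ᵐ θ ∂P, 0 < L θ)
    (hL_int : Integrable L P) (hZ_pos : 0 < ∫ θ, L θ ∂P)
    (Q : Measure Θ) [IsProbabilityMeasure Q] (hQP : Q ≪ P)
    (hKL : klDiv Q P < ∞) (hlogL : Integrable (fun θ => Real.log (L θ)) Q) :
    ((∫ θ, (- Real.log (L θ)) ∂Q) + (klDiv Q P).toReal)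
        - (- Real.log (∫ θ, L θ ∂P))
      = (klDiv Q (P.withDensity fun θ => ENNReal.ofReal (L θ / ∫ θ', L θ' ∂P))).toReal
    ∧ klDiv Q (P.withDensity fun θ => ENNReal.ofReal (L θ / ∫ θ', L θ' ∂P)) < ∞ :=
  variational_gap_eq_klDiv_posterior_general P L hL_pos hL_int Q hKL hlogL
end

section
/- Let Θ be a measurable space, P a probability measure on Θ, and L : Θ → ℝ measurable with L(θ) > 0 for P-almost every θ and 0 < Z := ∫ L dP < ∞. Define the posterior Π := P.withDensity (fun θ => ENNReal.ofReal (L θ / Z)). For every probability measure Q on Θ with Q ≪ P, KL(Q‖P) < ∞, and θ ↦ log (L θ) integrable with respect to Q, the variational codelength bounds the Bayesian codelength from above: ∫ (− log (L θ)) dQ(θ) + (KL(Q‖P)).toReal ≥ − log Z, with equality if and only if Q = Π. -/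
/-!
With `f = log L`, the posterior is the exponential tilt `P.tilted f` of the prior, and the
log-likelihood ratio against it is `llr Q P - f + log Z`. Integrating over `Q` shows that the
variational codelength exceeds the Bayesian one by exactly `KL(Q‖posterior)`, so Gibbs'
inequality and its equality case give both claims.
-/

open MeasureTheory Real
open scoped ENNReal

section Gibbs

variable {α : Type*} [MeasurableSpace α] {μ ν : Measure α}

lemma klDiv_eq_informationTheory_klDiv_s1 [IsProbabilityMeasure μ] [IsProbabilityMeasure ν] :
    klDiv μ ν = InformationTheory.klDiv μ ν := by
  by_cases h : μ ≪ ν ∧ Integrable (llr μ ν) μ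
  · rw [klDiv, if_pos h, InformationTheory.klDiv_of_ac_of_integrable h.1 h.2]
    simp
  · rw [klDiv, if_neg h, eq_comm, InformationTheory.klDiv_eq_top_iff]
    tauto

lemma tilted_log_eq_withDensity {L : α → ℝ} (hL : ∀ᵐ x ∂μ, 0 < L x) :
    μ.tilted (fun x => log (L x)) = μ.withDensity fun x => ENNReal.ofReal (L x / ∫ y, L y ∂μ) := by
  have hexp : (fun x => exp (log (L x))) =ᵐ[μ] L := by
    filter_upwards [hL] with x hx using exp_log hx
  rw [Measure.tilted, integral_congr_ae hexp]
  refine withDensity_congr_ae ?_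
  filter_upwards [hexp] with x hx
  rw [hx]

lemma toReal_klDiv_tilted_right [IsProbabilityMeasure μ] [IsProbabilityMeasure ν] {f : α → ℝ}
    (hμν : μ ≪ ν) (hfμ : Integrable f μ) (hfν : Integrable (fun x => exp (f x)) ν)
    (h_int : Integrable (llr μ ν) μ) :
    (InformationTheory.klDiv μ (ν.tilted f)).toReal
      = (InformationTheory.klDiv μ ν).toReal - ∫ x, f x ∂μ + log (∫ x, exp (f x) ∂ν) := by
  have : IsProbabilityMeasure (ν.tilted f) := isProbabilityMeasure_tilted hfν
  rw [InformationTheory.toReal_klDiv_of_measure_eq (hμν.trans (absolutelyContinuous_tilted hfν))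
      (by simp), InformationTheory.toReal_klDiv_of_measure_eq hμν (by simp),
    integral_llr_tilted_right hμν hfμ hfν h_int]

lemma toReal_klDiv_eq_zero_iff [IsFiniteMeasure μ] [IsFiniteMeasure ν]
    (h : InformationTheory.klDiv μ ν ≠ ∞) :
    (InformationTheory.klDiv μ ν).toReal = 0 ↔ μ = ν := by
  rw [ENNReal.toReal_eq_zero_iff, or_iff_left h, InformationTheory.klDiv_eq_zero_iff]

/-- Gibbs' variational principle, with its equality case. -/
theorem integral_sub_toReal_klDiv_le_log_integral_exp [IsProbabilityMeasure μ]
    [IsProbabilityMeasure ν] {f : α → ℝ} (hμν : μ ≪ ν) (hfμ : Integrable f μ)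
    (hfν : Integrable (fun x => exp (f x)) ν) (h_int : Integrable (llr μ ν) μ) :
    ∫ x, f x ∂μ - (InformationTheory.klDiv μ ν).toReal ≤ log (∫ x, exp (f x) ∂ν)
    ∧ (∫ x, f x ∂μ - (InformationTheory.klDiv μ ν).toReal = log (∫ x, exp (f x) ∂ν)
        ↔ μ = ν.tilted f) := by
  have : IsProbabilityMeasure (ν.tilted f) := isProbabilityMeasure_tilted hfν
  have h_gap := toReal_klDiv_tilted_right hμν hfμ hfν h_int
  have h_finite : InformationTheory.klDiv μ (ν.tilted f) ≠ ∞ :=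
    InformationTheory.klDiv_ne_top (hμν.trans (absolutelyContinuous_tilted hfν))
      (integrable_llr_tilted_right hμν hfμ h_int hfν)
  rw [← toReal_klDiv_eq_zero_iff h_finite, h_gap]
  refine ⟨?_, by constructor <;> intro h <;> linarith⟩
  linarith [(InformationTheory.klDiv μ (ν.tilted f)).toReal_nonneg]

end Gibbs

theorem variational_codelength_ge_bayesian_codelength_general
    {Θ : Type*} [MeasurableSpace Θ] (P : Measure Θ) [IsProbabilityMeasure P]
    (L : Θ → ℝ) (hL_pos : ∀ᵐ θ ∂P, 0 < L θ)
    (hL_int : Integrable L P)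
    (Q : Measure Θ) [IsProbabilityMeasure Q] (hQP : Q ≪ P)
    (hKL : klDiv Q P < ∞) (hlogL : Integrable (fun θ => Real.log (L θ)) Q) :
    (∫ θ, (- Real.log (L θ)) ∂Q) + (klDiv Q P).toReal ≥ - Real.log (∫ θ, L θ ∂P)
    ∧ ((∫ θ, (- Real.log (L θ)) ∂Q) + (klDiv Q P).toReal = - Real.log (∫ θ, L θ ∂P)
        ↔ Q = P.withDensity fun θ => ENNReal.ofReal (L θ / ∫ θ', L θ' ∂P)) := by
  have h_llr : Integrable (llr Q P) Q := by
    by_contra h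
    simp [klDiv, h] at hKL
  have hexp : (fun θ => exp (log (L θ))) =ᵐ[P] L := by
    filter_upwards [hL_pos] with θ hθ using exp_log hθ
  have h_gibbs := integral_sub_toReal_klDiv_le_log_integral_exp hQP hlogL
    (hL_int.congr hexp.symm) h_llr
  rw [integral_congr_ae hexp, tilted_log_eq_withDensity hL_pos] at h_gibbs
  rw [klDiv_eq_informationTheory_klDiv_s1, integral_neg]
  refine ⟨by linarith [h_gibbs.1], ?_⟩
  rw [← h_gibbs.2]
  constructor <;> intro h <;> linarith

/-- The variational codelength bounds the Bayesian codelength `- log Z` from above,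
with equality iff the variational distribution equals the posterior. -/
theorem variational_codelength_ge_bayesian_codelength
    {Θ : Type*} [MeasurableSpace Θ] (P : Measure Θ) [IsProbabilityMeasure P]
    (L : Θ → ℝ) (hL_meas : Measurable L) (hL_pos : ∀ᵐ θ ∂P, 0 < L θ)
    (hL_int : Integrable L P) (hZ_pos : 0 < ∫ θ, L θ ∂P)
    (Q : Measure Θ) [IsProbabilityMeasure Q] (hQP : Q ≪ P)
    (hKL : klDiv Q P < ∞) (hlogL : Integrable (fun θ => Real.log (L θ)) Q) :
    (∫ θ, (- Real.log (L θ)) ∂Q) + (klDiv Q P).toReal ≥ - Real.log (∫ θ, L θ ∂P)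
    ∧ ((∫ θ, (- Real.log (L θ)) ∂Q) + (klDiv Q P).toReal = - Real.log (∫ θ, L θ ∂P)
        ↔ Q = P.withDensity fun θ => ENNReal.ofReal (L θ / ∫ θ', L θ' ∂P)) :=
  variational_codelength_ge_bayesian_codelength_general P L hL_pos hL_int Q hQP hKL hlogL
end

section
/- Let γ := gaussianReal 0 1, let v : ℝ → ℝ≥0 be a measurable function with ∫ y, (v y : ℝ) ∂γ < ∞ (v integrable with respect to γ), such that the map y ↦ gaussianReal 0 (v y) is a measurable family of measures, and define the Gaussian scale mixture μ := γ.bind (fun y => gaussianReal 0 (v y)). Then μ is a probability measure and its second moment equals the mean mixture variance: ∫ x, x² ∂μ = ∫ y, (v y : ℝ) ∂γ. -/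
/-! Given `y`, the centred Gaussian `N(0, v y)` has second moment equal to its variance `v y`.
Since `x ↦ x²` is nonnegative, its integral against the mixture can be computed by Tonelli for
`Measure.bind`, which averages these conditional second moments over the mixing measure. -/

open MeasureTheory ProbabilityTheory
open scoped ENNReal NNReal

namespace MeasureTheory.Measure

variable {α β : Type*} [MeasurableSpace α] [MeasurableSpace β]

theorem integral_bind_of_nonneg {m : Measure α} {κ : α → Measure β} (hκ : AEMeasurable κ m)
    {f : β → ℝ} (hf_nonneg : 0 ≤ f) (hf : Measurable f)
    (hfκ : ∀ᵐ a ∂m, Integrable f (κ a)) (hint : Integrable (fun a => ∫ x, f x ∂κ a) m) :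
    ∫ x, f x ∂m.bind κ = ∫ a, ∫ x, f x ∂κ a ∂m := by
  have hinner_nonneg : ∀ a, 0 ≤ ∫ x, f x ∂κ a := fun a => integral_nonneg hf_nonneg
  have hinner : ∀ᵐ a ∂m, ∫⁻ x, ENNReal.ofReal (f x) ∂κ a = ENNReal.ofReal (∫ x, f x ∂κ a) := by
    filter_upwards [hfκ] with a ha
    exact (ofReal_integral_eq_lintegral_ofReal ha (ae_of_all _ hf_nonneg)).symm
  rw [integral_eq_lintegral_of_nonneg_ae (ae_of_all _ hf_nonneg) hf.aestronglyMeasurable,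
    lintegral_bind hκ hf.ennreal_ofReal.aemeasurable, lintegral_congr_ae hinner,
    ← ofReal_integral_eq_lintegral_ofReal hint (ae_of_all _ hinner_nonneg),
    ENNReal.toReal_ofReal (integral_nonneg hinner_nonneg)]

end MeasureTheory.Measure

namespace ProbabilityTheory

theorem integral_sq_gaussianReal_zero (v : ℝ≥0) : ∫ x, x ^ 2 ∂gaussianReal 0 v = v := by
  simpa [integral_id_gaussianReal] using
    (variance_eq_integral (μ := gaussianReal 0 v) aemeasurable_id).symm.trans
      variance_id_gaussianReal

theorem integrable_sq_gaussianReal (μ : ℝ) (v : ℝ≥0) :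
    Integrable (fun x => x ^ 2) (gaussianReal μ v) :=
  (memLp_id_gaussianReal 2).integrable_sq

end ProbabilityTheory

theorem gaussian_scale_mixture_second_moment_general
    (v : ℝ → ℝ≥0)
    (hker : Measurable fun y => gaussianReal 0 (v y))
    (hint : Integrable (fun y => (v y : ℝ)) (gaussianReal 0 1)) :
    IsProbabilityMeasure ((gaussianReal 0 1).bind fun y => gaussianReal 0 (v y))
    ∧ ∫ x, x ^ 2 ∂((gaussianReal 0 1).bind fun y => gaussianReal 0 (v y))
        = ∫ y, (v y : ℝ) ∂(gaussianReal 0 1) := by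
  refine ⟨isProbabilityMeasure_bind hker.aemeasurable (ae_of_all _ fun _ => inferInstance), ?_⟩
  simp_rw [← integral_sq_gaussianReal_zero] at hint ⊢
  exact Measure.integral_bind_of_nonneg hker.aemeasurable (fun x => sq_nonneg x)
    (measurable_id.pow_const 2) (ae_of_all _ fun _ => integrable_sq_gaussianReal 0 _) hint

/-- A Gaussian scale mixture over a standard Gaussian mixing measure is a probability
measure whose second moment equals the mean mixture variance. -/
theorem gaussian_scale_mixture_second_moment
    (v : ℝ → ℝ≥0) (hv : Measurable v)
    (hker : Measurable fun y => gaussianReal 0 (v y))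
    (hint : Integrable (fun y => (v y : ℝ)) (gaussianReal 0 1)) :
    IsProbabilityMeasure ((gaussianReal 0 1).bind fun y => gaussianReal 0 (v y))
    ∧ ∫ x, x ^ 2 ∂((gaussianReal 0 1).bind fun y => gaussianReal 0 (v y))
        = ∫ y, (v y : ℝ) ∂(gaussianReal 0 1) :=
  gaussian_scale_mixture_second_moment_general v hker hint
end
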